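/- (Superselection braid by recursion.) Let n ≥ 2 and let k, l be positive integers with k + l = n. In the braid group B_n, the superselection braid β_n is given by each of the following four expressions: (i) β_n = β_l · r_l(β_k) · t_{k,l}; (ii) β_n = t_{k,l} · β_k · r_k(β_l); (iii) β_n = β_l · t_{k,l} · β_k; (iv) β_n = r_l(β_k) · t_{k,l} · r_k(β_l). Moreover β_l commutes with r_l(β_k), and β_k commutes with r_k(β_l). -/

import Mathlib

/-!
Formalization of identities in the Artin braid group `B_m`.

We encode "the identity `w₁ = w₂` holds in the braid group `B_m`" via the universal
property of the presented group: it holds in `B_m` iff for every group `G` and every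
assignment `σ : ℕ → G` of the generators `σ_1, …, σ_{m-1}` satisfying the defining
braid relations of `B_m`, the corresponding products in `G` are equal.

Braid words are recorded as lists of (1-based) generator indices; `wordProd σ w`
is the corresponding product.  The anti-automorphism `χ` (which fixes each
generator and reverses the order of the letters of a word) corresponds to
`List.reverse` on words, and the shift homomorphism `r_a : σ_i ↦ σ_{i+a}`
corresponds to `rWord a` on words.
-/

namespace Braid

variable {G : Type*} [Group G]

/-- The product in `G` of the braid word `w` (a list of 1-based generator indices). -/
def wordProd (σ : ℕ → G) (w : List ℕ) : G := (w.map σ).prod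

/-- `σ 1, …, σ (m-1)` satisfy the defining relations of the Artin braid group `B_m`:
`σ_i σ_{i+1} σ_i = σ_{i+1} σ_i σ_{i+1}` for `1 ≤ i ≤ m-2`, and
`σ_i σ_j = σ_j σ_i` for `|i - j| ≥ 2`, `1 ≤ i, j ≤ m-1`. -/
def IsBraidRep (m : ℕ) (σ : ℕ → G) : Prop :=
  (∀ i, 1 ≤ i → i + 2 ≤ m → σ i * σ (i + 1) * σ i = σ (i + 1) * σ i * σ (i + 1)) ∧
  (∀ i j, 1 ≤ i → i + 2 ≤ j → j + 1 ≤ m → σ i * σ j = σ j * σ i)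

/-- The word `[1, 2, …, j]` representing `b_j = σ_1 σ_2 ⋯ σ_j` (with `b_0 = e`). -/
def bWord (j : ℕ) : List ℕ := List.range' 1 j

/-- The word representing the superselection braid `β_n = b_{n-1} b_{n-2} ⋯ b_1`
(with `β_1 = β_0 = e`). -/
def betaWord : ℕ → List ℕ
  | 0 => []
  | n + 1 => bWord n ++ betaWord n

/-- The shift `r_a : σ_i ↦ σ_{i+a}` on braid words. -/
def rWord (a : ℕ) (w : List ℕ) : List ℕ := w.map (· + a)

/-- The word representing `t_{k,l} = r_0(χ(b_l)) · r_1(χ(b_l)) ⋯ r_{k-1}(χ(b_l))`,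
the braid clockwise exchanging a block of `k` strands with a block of `l` strands. -/
def tWord : ℕ → ℕ → List ℕ
  | 0, _ => []
  | k + 1, l => tWord k l ++ rWord k (bWord l).reverse

/-! ### word product basics -/

@[simp] theorem wordProd_nil (σ : ℕ → G) : wordProd σ [] = 1 := rfl

@[simp] theorem wordProd_cons (σ : ℕ → G) (i : ℕ) (w : List ℕ) :
    wordProd σ (i :: w) = σ i * wordProd σ w := by simp [wordProd]

@[simp] theorem wordProd_append (σ : ℕ → G) (u v : List ℕ) :
    wordProd σ (u ++ v) = wordProd σ u * wordProd σ v := by simp [wordProd]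

@[simp] theorem wordProd_singleton (σ : ℕ → G) (i : ℕ) : wordProd σ [i] = σ i := by
  simp [wordProd]

/-! ### word combinatorics -/

theorem rWord_nil (a : ℕ) : rWord a [] = [] := rfl

theorem rWord_cons (a i : ℕ) (w : List ℕ) : rWord a (i :: w) = (i + a) :: rWord a w := rfl

theorem rWord_zero (w : List ℕ) : rWord 0 w = w := by simp [rWord]

theorem bWord_zero : bWord 0 = [] := rfl

theorem bWord_succ (m : ℕ) : bWord (m + 1) = bWord m ++ [m + 1] := by
  simp [bWord, List.range'_concat, Nat.add_comm]

theorem mem_bWord {i m : ℕ} (hi : i ∈ bWord m) : 1 ≤ i ∧ i ≤ m := by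
  rw [bWord, List.mem_range'_1] at hi; omega

theorem chi_succ (m : ℕ) : (bWord (m + 1)).reverse = (m + 1) :: (bWord m).reverse := by
  rw [bWord_succ]; simp

theorem rchi_succ (a m : ℕ) :
    rWord a (bWord (m + 1)).reverse = (a + m + 1) :: rWord a (bWord m).reverse := by
  rw [chi_succ, rWord_cons]
  congr 1
  omega

theorem rchi_shift (a l : ℕ) :
    rWord (a + 1) (bWord l).reverse ++ [a + 1] = rWord a (bWord (l + 1)).reverse := by
  induction l with
  | zero => simp [bWord_zero, rWord_nil, rchi_succ]
  | succ l ih =>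
    rw [rchi_succ, rchi_succ, List.cons_append, ih]
    congr 1
    omega

theorem bWord_split (k l : ℕ) : bWord (k + l) = bWord l ++ rWord l (bWord k) := by
  have h1 : rWord l (bWord k) = List.range' (1 + l) k := by
    rw [rWord, bWord, show ((· + l) : ℕ → ℕ) = (fun x => l + x) from funext fun x => Nat.add_comm x l,
      List.map_add_range']
    congr 1
    omega
  rw [bWord, bWord, h1]
  exact (Nat.add_comm k l ▸ List.range'_append_1 (s := 1) (m := l) (n := k)).symm

theorem mem_rWord {i a : ℕ} {w : List ℕ} (hi : i ∈ rWord a w) : ∃ j ∈ w, i = j + a := by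
  simp only [rWord, List.mem_map] at hi
  obtain ⟨j, hj, rfl⟩ := hi
  exact ⟨j, hj, rfl⟩

theorem mem_betaWord {i m : ℕ} (hi : i ∈ betaWord m) : 1 ≤ i ∧ i + 1 ≤ m := by
  induction m with
  | zero => simp [betaWord] at hi
  | succ m ih =>
    rw [betaWord, List.mem_append] at hi
    rcases hi with hi | hi
    · have := mem_bWord hi; omega
    · have := ih hi; omega

theorem mem_tWord {i k l : ℕ} (hi : i ∈ tWord k l) : 1 ≤ i ∧ i + 1 ≤ k + l := by
  induction k with
  | zero => simp [tWord] at hi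
  | succ k ih =>
    rw [tWord, List.mem_append] at hi
    rcases hi with hi | hi
    · have := ih hi; omega
    · obtain ⟨j, hj, rfl⟩ := mem_rWord hi
      have := mem_bWord (List.mem_reverse.mp hj)
      omega

theorem mem_rchi {j a m : ℕ} (hj : j ∈ rWord a (bWord m).reverse) :
    a + 1 ≤ j ∧ j ≤ a + m := by
  obtain ⟨j', hj', rfl⟩ := mem_rWord hj
  have := mem_bWord (List.mem_reverse.mp hj')
  omega

/-! ### group lemmas -/

section Rep

variable {n : ℕ} {σ : ℕ → G} (h : IsBraidRep n σ)

include h in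
theorem braid3 (i : ℕ) (h1 : 1 ≤ i) (h2 : i + 2 ≤ n) (x : G) :
    σ i * (σ (i + 1) * (σ i * x)) = σ (i + 1) * (σ i * (σ (i + 1) * x)) := by
  rw [← mul_assoc, ← mul_assoc, ← mul_assoc, ← mul_assoc, h.1 i h1 h2]

include h in
theorem comm_single (i j : ℕ) (h1 : 1 ≤ i) (h2 : i + 2 ≤ j) (h3 : j + 1 ≤ n) :
    σ i * σ j = σ j * σ i := h.2 i j h1 h2 h3

theorem comm_letter (i : ℕ) (v : List ℕ) (hc : ∀ j ∈ v, σ i * σ j = σ j * σ i) (x : G) :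
    σ i * (wordProd σ v * x) = wordProd σ v * (σ i * x) := by
  induction v generalizing x with
  | nil => simp
  | cons j v ih =>
    simp only [wordProd_cons, mul_assoc]
    rw [← mul_assoc (σ i), hc j (by simp), mul_assoc, ih (fun j hj => hc j (by simp [hj]))]

theorem comm_word (u v : List ℕ) (hc : ∀ i ∈ u, ∀ j ∈ v, σ i * σ j = σ j * σ i) (x : G) :
    wordProd σ u * (wordProd σ v * x) = wordProd σ v * (wordProd σ u * x) := by
  induction u generalizing x with
  | nil => simp
  | cons i u ih =>
    simp only [wordProd_cons, mul_assoc]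
    rw [ih (fun i hi => hc i (by simp [hi])), comm_letter i v (hc i (by simp))]

include h in
theorem chi_shift (a m i : ℕ) (h1 : 1 ≤ i) (h2 : i + 1 ≤ m) (h3 : a + m + 1 ≤ n) (x : G) :
    σ (a + i) * (wordProd σ (rWord a (bWord m).reverse) * x) =
      wordProd σ (rWord a (bWord m).reverse) * (σ (a + i + 1) * x) := by
  induction m generalizing x with
  | zero => omega
  | succ m ih =>
    rw [rchi_succ]
    rcases Nat.lt_or_ge i m with hi | hi
    · simp only [wordProd_cons, mul_assoc]
      rw [← mul_assoc (σ (a + i)), comm_single h (a + i) (a + m + 1) (by omega) (by omega) (by omega),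
        mul_assoc, ih (by omega) (by omega)]
    · have him : i = m := by omega
      subst him
      obtain ⟨m', rfl⟩ : ∃ m', i = m' + 1 := ⟨i - 1, by omega⟩
      rw [rchi_succ]
      simp only [wordProd_cons, mul_assoc]
      have e1 : a + (m' + 1) = a + m' + 1 := by omega
      have e2 : a + (m' + 1) + 1 = a + m' + 1 + 1 := by omega
      rw [e1, braid3 h (a + m' + 1) (by omega) (by omega)]
      rw [comm_letter (a + m' + 1 + 1) (rWord a (bWord m').reverse)
        (fun j hj => (comm_single h j (a + m' + 1 + 1) (by have := mem_rchi hj; omega)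
          (by have := mem_rchi hj; omega) (by omega)).symm)]

include h in
theorem cab (a l : ℕ) (hn : a + l + 2 ≤ n) (x : G) :
    wordProd σ (rWord a (bWord l).reverse) *
        (σ (a + l + 1) * (wordProd σ (rWord a (bWord l).reverse) * x)) =
      σ (a + l + 1) * (wordProd σ (rWord a (bWord l).reverse) *
        (wordProd σ (rWord (a + 1) (bWord l).reverse) * x)) := by
  induction l generalizing x with
  | zero => simp [bWord_zero, rWord_nil]
  | succ l ih =>
    have hcomm : ∀ j ∈ rWord a (bWord l).reverse,
        σ (a + l + 1 + 1) * σ j = σ j * σ (a + l + 1 + 1) :=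
      fun j hj => (comm_single h j (a + l + 1 + 1) (by have := mem_rchi hj; omega)
        (by have := mem_rchi hj; omega) (by omega)).symm
    rw [rchi_succ, rchi_succ]
    simp only [wordProd_cons, mul_assoc]
    have e : a + (l + 1) + 1 = a + l + 1 + 1 := by omega
    have e2 : a + 1 + l + 1 = a + l + 1 + 1 := by omega
    rw [e, e2]
    -- goal : s1 * (c * (s2 * (s1 * (c * x)))) = s2 * (s1 * (c * (s2 * (c' * x))))
    -- where s1 = σ (a+l+1), s2 = σ (a+l+2), c = P(rWord a rev b_l), c' = P(rWord (a+1) rev b_l)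
    rw [← comm_letter (a + l + 1 + 1) (rWord a (bWord l).reverse) hcomm]
    -- s1 * (s2 * (c * (s1 * (c * x)))) = ...
    rw [ih (by omega)]
    -- s1 * (s2 * (s1 * (c * (c' * x)))) = ...
    rw [braid3 h (a + l + 1) (by omega) (by omega)]
    rw [comm_letter (a + l + 1 + 1) (rWord a (bWord l).reverse) hcomm]

include h in
theorem bnd (k l : ℕ) (h2 : k + l + 2 ≤ n) (x : G) :
    wordProd σ (tWord (k + 1) l) * (wordProd σ (rWord k (bWord (l + 1)).reverse) * x) =
      σ (k + l + 1) * (wordProd σ (tWord (k + 2) l) * x) := by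
  have htc : ∀ j ∈ tWord k l, σ (k + l + 1) * σ j = σ j * σ (k + l + 1) :=
    fun j hj => (comm_single h j (k + l + 1) (by have := mem_tWord hj; omega)
      (by have := mem_tWord hj; omega) (by omega)).symm
  show wordProd σ (tWord k l ++ rWord k (bWord l).reverse) * _ = _ *
    (wordProd σ ((tWord k l ++ rWord k (bWord l).reverse) ++ rWord (k + 1) (bWord l).reverse) * x)
  rw [rchi_succ]
  simp only [wordProd_append, wordProd_cons, mul_assoc]
  rw [cab h k l (by omega), ← comm_letter (k + l + 1) (tWord k l) htc]

include h in
theorem t1 (k l i : ℕ) (h1 : 1 ≤ i) (h2 : i + 1 ≤ k) (h3 : k + l ≤ n) (x : G) :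
    wordProd σ (tWord k l) * (σ i * x) = σ (i + l) * (wordProd σ (tWord k l) * x) := by
  induction k generalizing x with
  | zero => omega
  | succ k ih =>
    rcases Nat.lt_or_ge i k with hik | hik
    · -- i + 1 ≤ k
      show wordProd σ (tWord k l ++ rWord k (bWord l).reverse) * _ =
        _ * (wordProd σ (tWord k l ++ rWord k (bWord l).reverse) * x)
      simp only [wordProd_append, mul_assoc]
      rw [← comm_letter i (rWord k (bWord l).reverse)
        (fun j hj => comm_single h i j h1 (by have := mem_rchi hj; omega)
          (by have := mem_rchi hj; omega)), ih (by omega) (by omega)]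
    · -- i = k, k = k' + 1
      have hik' : i = k := by omega
      subst hik'
      obtain ⟨k', rfl⟩ : ∃ k', i = k' + 1 := ⟨i - 1, by omega⟩
      show wordProd σ (tWord (k' + 1) l ++ rWord (k' + 1) (bWord l).reverse) * _ =
        _ * (wordProd σ (tWord (k' + 2) l) * x)
      simp only [wordProd_append, mul_assoc]
      have key : wordProd σ (rWord (k' + 1) (bWord l).reverse) * (σ (k' + 1) * x) =
          wordProd σ (rWord k' (bWord (l + 1)).reverse) * x := by
        rw [← rchi_shift]
        simp [mul_assoc]
      rw [key, bnd h k' l (by omega)]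
      congr 2
      omega

include h in
theorem t2 (k l j : ℕ) (h1 : 1 ≤ j) (h2 : j + 1 ≤ l) (h3 : k + l ≤ n) (x : G) :
    wordProd σ (tWord k l) * (σ (j + k) * x) = σ j * (wordProd σ (tWord k l) * x) := by
  induction k generalizing x with
  | zero => simp [tWord]
  | succ k ih =>
    show wordProd σ (tWord k l ++ rWord k (bWord l).reverse) * _ =
      _ * (wordProd σ (tWord k l ++ rWord k (bWord l).reverse) * x)
    simp only [wordProd_append, mul_assoc]
    have e : j + (k + 1) = k + j + 1 := by omega
    rw [e, ← chi_shift h k l j h1 h2 (by omega)]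
    have e2 : k + j = j + k := by omega
    rw [e2, ih (by omega)]

include h in
theorem t1w (k l : ℕ) (w : List ℕ) (hw : ∀ i ∈ w, 1 ≤ i ∧ i + 1 ≤ k) (h3 : k + l ≤ n) (x : G) :
    wordProd σ (tWord k l) * (wordProd σ w * x) =
      wordProd σ (rWord l w) * (wordProd σ (tWord k l) * x) := by
  induction w generalizing x with
  | nil => simp [rWord_nil]
  | cons i w ih =>
    rw [rWord_cons]
    simp only [wordProd_cons, mul_assoc]
    rw [t1 h k l i (hw i (by simp)).1 (hw i (by simp)).2 h3,
      ih (fun i hi => hw i (by simp [hi]))]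

include h in
theorem t2w (k l : ℕ) (w : List ℕ) (hw : ∀ j ∈ w, 1 ≤ j ∧ j + 1 ≤ l) (h3 : k + l ≤ n) (x : G) :
    wordProd σ w * (wordProd σ (tWord k l) * x) =
      wordProd σ (tWord k l) * (wordProd σ (rWord k w) * x) := by
  induction w generalizing x with
  | nil => simp [rWord_nil]
  | cons j w ih =>
    rw [rWord_cons]
    simp only [wordProd_cons, mul_assoc]
    rw [ih (fun j hj => hw j (by simp [hj])),
      ← t2 h k l j (hw j (by simp)).1 (hw j (by simp)).2 h3]

include h in
theorem bchi (l : ℕ) (hl : l + 1 ≤ n) (x : G) :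
    wordProd σ (bWord l) * (wordProd σ (betaWord l) * x) =
      wordProd σ (betaWord l) * (wordProd σ (bWord l).reverse * x) := by
  induction l generalizing x with
  | zero => simp [bWord_zero, betaWord]
  | succ l ih =>
    rw [chi_succ, bWord_succ, show betaWord (l + 1) = bWord l ++ betaWord l from rfl]
    simp only [wordProd_append, wordProd_cons, wordProd_nil, wordProd_singleton, one_mul, mul_assoc]
    rw [ih (by omega)]
    rw [comm_letter (l + 1) (betaWord l)
      (fun j hj => (comm_single h j (l + 1) (by have := mem_betaWord hj; omega)
        (by have := mem_betaWord hj; omega) (by omega)).symm)]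

include h in
theorem key (k l : ℕ) (h2 : k + l + 1 ≤ n) (x : G) :
    wordProd σ (bWord l).reverse * (wordProd σ (rWord l (bWord k)) *
        (wordProd σ (tWord k l) * x)) =
      wordProd σ (rWord l (bWord k)) * (wordProd σ (tWord (k + 1) l) * x) := by
  have tsucc : ∀ m, tWord (m + 1) l = tWord m l ++ rWord m (bWord l).reverse := fun _ => rfl
  induction k generalizing x with
  | zero =>
    rw [tsucc 0, show tWord 0 l = [] from rfl, show rWord l (bWord 0) = [] from rfl, rWord_zero]
    simp
  | succ k ih =>
    have hbk : rWord l (bWord (k + 1)) = rWord l (bWord k) ++ [k + l + 1] := by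
      rw [bWord_succ]
      show List.map _ (bWord k ++ [k + 1]) = _
      rw [List.map_append]
      congr 1
      show [k + 1 + l] = [k + l + 1]
      congr 1
      omega
    have htc : ∀ j ∈ tWord k l, σ (k + l + 1) * σ j = σ j * σ (k + l + 1) :=
      fun j hj => (comm_single h j (k + l + 1) (by have := mem_tWord hj; omega)
        (by have := mem_tWord hj; omega) (by omega)).symm
    rw [hbk, tsucc (k + 1), tsucc k]
    simp only [wordProd_append, wordProd_cons, wordProd_nil, wordProd_singleton, one_mul, mul_assoc]
    rw [comm_letter (k + l + 1) (tWord k l) htc, ih (by omega), tsucc k]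
    simp only [wordProd_append, mul_assoc]
    rw [cab h k l (by omega), ← comm_letter (k + l + 1) (tWord k l) htc]

include h in
theorem main3 (k l : ℕ) (h3 : k + l ≤ n) :
    wordProd σ (betaWord (k + l)) =
      wordProd σ (betaWord l) * (wordProd σ (tWord k l) * wordProd σ (betaWord k)) := by
  induction k with
  | zero => simp [betaWord, tWord, Nat.zero_add]
  | succ k ih =>
    have e : k + 1 + l = (k + l) + 1 := by omega
    rw [e, show betaWord ((k + l) + 1) = bWord (k + l) ++ betaWord (k + l) from rfl,
      bWord_split k l, show betaWord (k + 1) = bWord k ++ betaWord k from rfl]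
    simp only [wordProd_append, mul_assoc]
    rw [ih (by omega)]
    rw [comm_word (rWord l (bWord k)) (betaWord l) (fun i hi j hj => by
      obtain ⟨i', hi', rfl⟩ := mem_rWord hi
      have hb := mem_bWord hi'
      have hj' := mem_betaWord hj
      exact (comm_single h j (i' + l) (by omega) (by omega) (by omega)).symm)]
    rw [bchi h l (by omega), key h k l (by omega),
      t1w h (k + 1) l (bWord k) (fun i hi => by have := mem_bWord hi; omega) (by omega)]

end Rep

/-- **Superselection braid by recursion.**  Let `n ≥ 2` and let `k, l` be positive
integers with `k + l = n`.  In the braid group `B_n`, the superselection braid `β_n`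
is given by each of the following four expressions:
(i) `β_n = β_l ⬝ r_l(β_k) ⬝ t_{k,l}`; (ii) `β_n = t_{k,l} ⬝ β_k ⬝ r_k(β_l)`;
(iii) `β_n = β_l ⬝ t_{k,l} ⬝ β_k`; (iv) `β_n = r_l(β_k) ⬝ t_{k,l} ⬝ r_k(β_l)`.
Moreover `β_l` commutes with `r_l(β_k)`, and `β_k` commutes with `r_k(β_l)`. -/
theorem beta_recursion (n k l : ℕ) (hn : 2 ≤ n) (hk : 1 ≤ k) (hl : 1 ≤ l)
    (hkl : k + l = n) (σ : ℕ → G) (h : IsBraidRep n σ) :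
    (wordProd σ (betaWord n) =
      wordProd σ (betaWord l) * wordProd σ (rWord l (betaWord k)) *
        wordProd σ (tWord k l)) ∧
    (wordProd σ (betaWord n) =
      wordProd σ (tWord k l) * wordProd σ (betaWord k) *
        wordProd σ (rWord k (betaWord l))) ∧
    (wordProd σ (betaWord n) =
      wordProd σ (betaWord l) * wordProd σ (tWord k l) * wordProd σ (betaWord k)) ∧
    (wordProd σ (betaWord n) =
      wordProd σ (rWord l (betaWord k)) * wordProd σ (tWord k l) *
        wordProd σ (rWord k (betaWord l))) ∧
    (wordProd σ (betaWord l) * wordProd σ (rWord l (betaWord k)) =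
      wordProd σ (rWord l (betaWord k)) * wordProd σ (betaWord l)) ∧
    (wordProd σ (betaWord k) * wordProd σ (rWord k (betaWord l)) =
      wordProd σ (rWord k (betaWord l)) * wordProd σ (betaWord k)) := by
  subst hkl
  set A := wordProd σ (betaWord l) with hA
  set B := wordProd σ (rWord l (betaWord k)) with hB
  set T := wordProd σ (tWord k l) with hT
  set K := wordProd σ (betaWord k) with hK
  set L := wordProd σ (rWord k (betaWord l)) with hL
  have F3 : wordProd σ (betaWord (k + l)) = A * (T * K) := main3 h k l le_rfl
  have FT1 : T * K = B * T := by
    have := t1w h k l (betaWord k) (fun i hi => by have := mem_betaWord hi; omega) le_rfl 1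
    simpa using this
  have FT2 : A * T = T * L := by
    have := t2w h k l (betaWord l) (fun j hj => by have := mem_betaWord hj; omega) le_rfl 1
    simpa using this
  have FV : A * B = B * A := by
    have := comm_word (σ := σ) (betaWord l) (rWord l (betaWord k)) (fun i hi j hj => by
      have hi' := mem_betaWord hi
      obtain ⟨j', hj', rfl⟩ := mem_rWord hj
      have hjb := mem_betaWord hj'
      exact comm_single (n := k + l) h i (j' + l) (by omega) (by omega) (by omega)) 1
    simpa using this
  have FW : K * L = L * K := by
    have := comm_word (σ := σ) (betaWord k) (rWord k (betaWord l)) (fun i hi j hj => by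
      have hi' := mem_betaWord hi
      obtain ⟨j', hj', rfl⟩ := mem_rWord hj
      have hjb := mem_betaWord hj'
      exact comm_single (n := k + l) h i (j' + k) (by omega) (by omega) (by omega)) 1
    simpa using this
  have G3 : wordProd σ (betaWord (k + l)) = A * T * K := by rw [F3, mul_assoc]
  have G1 : wordProd σ (betaWord (k + l)) = A * B * T := by
    rw [F3, FT1, ← mul_assoc]
  have G2 : wordProd σ (betaWord (k + l)) = T * K * L := by
    rw [G3, FT2, mul_assoc, ← FW, ← mul_assoc]
  have G4 : wordProd σ (betaWord (k + l)) = B * T * L := by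
    rw [G1, FV, mul_assoc, FT2, ← mul_assoc]
  exact ⟨G1, G2, G3, G4, FV, FW⟩


end Braid
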